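/- If λ ∈ R^p satisfies Σ_{i∈I} λ_i ≤ Σ_{i=1}^{|I|} w_i for every subset I ⊆ {1,...,p}, where w_1 ≥ w_2 ≥ ... ≥ w_p ≥ 0 (this ordering is not needed; only the stated constraints), then for all y ∈ R^p with nonnegative components, Σ_{i=1}^p λ_i y_i ≤ OWA(y) = Σ_{i=1}^p w_i y_{(i)}. -/

import Mathlib

noncomputable def sortedDesc {p : ℕ} (y : Fin p → ℝ) : Fin p → ℝ :=
  fun i => y (Tuple.sort y (Fin.rev i))

/-- Ordered weighted average: `owa w y = ∑ i, w i * y_(i)` where `y_(i)` is the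
`i`-th largest component of `y`. -/
noncomputable def owa {p : ℕ} (w y : Fin p → ℝ) : ℝ :=
  ∑ i, w i * sortedDesc y i

/-!
Sort `y` decreasingly by a permutation `e`, so that `∑ i, l i * y i = ∑ i, l (e i) * y_(i)`.
Applied to `I = e '' {0, …, k}`, the hypothesis says that each prefix sum of `l ∘ e` is
dominated by the corresponding prefix sum of `w`. This domination survives pairing with the
antitone, nonnegative sequence `y_(i)` (Abel summation): writing `y_(i) = (y_(i) - y_(p)) + y_(p)`
splits the sum into a shorter instance of the same inequality plus `y_(p)` times the full sum.
-/

open Finset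

namespace Fin

theorem sum_mul_eq_sum_castSucc_mul_sub_add {R : Type*} [CommRing R] {n : ℕ}
    (a z : Fin (n + 1) → R) :
    ∑ i, a i * z i =
      ∑ i : Fin n, a i.castSucc * (z i.castSucc - z (last n)) + (∑ i, a i) * z (last n) := by
  simp only [sum_univ_castSucc, mul_sub, sum_sub_distrib, add_mul, sum_mul]
  ring

variable {R : Type*} [CommRing R] [LinearOrder R] [IsStrictOrderedRing R]

theorem sum_mul_le_sum_mul_of_sum_Iic_le {n : ℕ} (a b z : Fin n → R) (hz : Antitone z)
    (hz0 : ∀ i, 0 ≤ z i) (hab : ∀ k, ∑ i ∈ Iic k, a i ≤ ∑ i ∈ Iic k, b i) :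
    ∑ i, a i * z i ≤ ∑ i, b i * z i := by
  induction n with
  | zero => simp
  | succ n ih =>
    rw [sum_mul_eq_sum_castSucc_mul_sub_add a, sum_mul_eq_sum_castSucc_mul_sub_add b]
    have hinit : ∑ i : Fin n, a i.castSucc * (z i.castSucc - z (last n)) ≤
        ∑ i : Fin n, b i.castSucc * (z i.castSucc - z (last n)) := by
      refine ih _ _ _ (fun i j hij => sub_le_sub_right (hz (castSucc_le_castSucc_iff.2 hij)) _)
        (fun _ => sub_nonneg.2 (hz (le_last _))) fun k => ?_
      simpa only [sum_Iic_castSucc] using hab k.castSucc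
    have htotal : ∑ i, a i ≤ ∑ i, b i := by
      simpa only [← top_eq_last, Iic_top] using hab (last n)
    exact add_le_add hinit (mul_le_mul_of_nonneg_right htotal (hz0 _))

theorem filter_val_lt_add_one_eq_Iic {n : ℕ} (k : Fin n) :
    univ.filter (fun j : Fin n => (j : ℕ) < k + 1) = Iic k := by
  ext j
  simp only [mem_filter, mem_univ, true_and, mem_Iic, Order.lt_add_one_iff, Fin.le_def]

end Fin

theorem antitone_sortedDesc {p : ℕ} (y : Fin p → ℝ) : Antitone (sortedDesc y) :=
  fun _ _ hij => Tuple.monotone_sort y (Fin.rev_le_rev.2 hij)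

theorem weighted_sum_le_owa_general {p : ℕ} (w l : Fin p → ℝ)
    (hl : ∀ I : Finset (Fin p),
      ∑ i ∈ I, l i ≤ ∑ j ∈ Finset.univ.filter (fun j : Fin p => (j : ℕ) < I.card), w j)
    (y : Fin p → ℝ) (hy : ∀ j, 0 ≤ y j) :
    ∑ i, l i * y i ≤ owa w y := by
  set e : Equiv.Perm (Fin p) := Fin.revPerm.trans (Tuple.sort y)
  have hsorted : ∀ i, sortedDesc y i = y (e i) := fun _ => rfl
  have hprefix : ∀ k, ∑ i ∈ Iic k, l (e i) ≤ ∑ i ∈ Iic k, w i := fun k => by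
    simpa only [sum_map, Equiv.coe_toEmbedding, card_map, Fin.card_Iic,
      Fin.filter_val_lt_add_one_eq_Iic] using hl ((Iic k).map e.toEmbedding)
  calc ∑ i, l i * y i = ∑ i, l (e i) * sortedDesc y i := by
        simp only [hsorted]; exact (Equiv.sum_comp e _).symm
    _ ≤ ∑ i, w i * sortedDesc y i :=
        Fin.sum_mul_le_sum_mul_of_sum_Iic_le _ _ _ (antitone_sortedDesc y) (fun _ => hy _) hprefix
    _ = owa w y := rfl

theorem weighted_sum_le_owa {p : ℕ} (w l : Fin p → ℝ) (hw0 : ∀ i, 0 ≤ w i)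
    (hl : ∀ I : Finset (Fin p),
      ∑ i ∈ I, l i ≤ ∑ j ∈ Finset.univ.filter (fun j : Fin p => (j : ℕ) < I.card), w j)
    (y : Fin p → ℝ) (hy : ∀ j, 0 ≤ y j) :
    ∑ i, l i * y i ≤ owa w y :=
  weighted_sum_le_owa_general w l hl y hy
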